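/- Let N be a finite set with n = |N| ≥ 1, let x : N → ℝ, and let m be an integer with 1 ≤ m ≤ n. Then the sum over all m-element subsets S of N of the maximum of x on S dominates the scaled total sum: n · Σ_{S ⊆ N, |S|=m} max_{t∈S} x(t) ≥ C(n,m) · Σ_{t∈N} x(t), where C(n,m) is the binomial coefficient. -/

import Mathlib

open Finset

/-- Maximum of a real-valued function over a finite set (0 on the empty set). -/
noncomputable def finsetMax {α : Type*} (x : α → ℝ) (S : Finset α) : ℝ :=
  if h : S.Nonempty then S.sup' h x else 0

/-! Averaging `∑_{t ∈ S} x t ≤ m · max_S x` over the `m`-subsets `S`: each `t ∈ N` lies in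
`C(n-1, m-1)` of them, and `n · C(n-1, m-1) = m · C(n, m)`. -/

theorem Nat.mul_choose_sub_one (n k : ℕ) : n * (n - 1).choose k = (k + 1) * n.choose (k + 1) := by
  cases n with
  | zero => simp
  | succ n => rw [Nat.add_sub_cancel, Nat.add_one_mul_choose_eq, Nat.mul_comm]

namespace Finset

variable {α : Type*}

theorem card_filter_mem_powersetCard [DecidableEq α] {N : Finset α} {t : α} (ht : t ∈ N)
    (k : ℕ) : #{S ∈ N.powersetCard (k + 1) | t ∈ S} = (#N - 1).choose k := by
  simpa [singleton_subset_iff] using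
    card_filter_powersetCard_subset {t} N (k + 1) (singleton_subset_iff.2 ht) (by simp)

theorem sum_powersetCard_sum {M : Type*} [AddCommMonoid M] (N : Finset α) (k : ℕ) (f : α → M) :
    ∑ S ∈ N.powersetCard (k + 1), ∑ t ∈ S, f t = (#N - 1).choose k • ∑ t ∈ N, f t := by
  classical
  rw [sum_comm' (t' := N) (s' := fun t => {S ∈ N.powersetCard (k + 1) | t ∈ S})]
  · rw [smul_sum]
    refine sum_congr rfl fun t ht => ?_
    rw [sum_const, card_filter_mem_powersetCard ht]
  · intro S t
    simp only [mem_filter, mem_powersetCard]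
    exact ⟨fun ⟨⟨hSN, hS⟩, htS⟩ => ⟨⟨⟨hSN, hS⟩, htS⟩, hSN htS⟩, fun ⟨h, _⟩ => ⟨h.1, h.2⟩⟩

end Finset

theorem sum_le_card_mul_finsetMax {α : Type*} (x : α → ℝ) (S : Finset α) :
    ∑ t ∈ S, x t ≤ #S * finsetMax x S := by
  rcases S.eq_empty_or_nonempty with rfl | hS
  · simp
  · rw [finsetMax, dif_pos hS, ← nsmul_eq_mul]
    exact sum_le_card_nsmul S x _ fun t ht => le_sup' x ht

theorem card_mul_sum_subset_max_ge_general
    {α : Type*} (N : Finset α) (x : α → ℝ) (m : ℕ)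
    (hm1 : 1 ≤ m) :
    (N.card : ℝ) * ∑ S ∈ N.powersetCard m, finsetMax x S ≥
      (N.card.choose m : ℝ) * ∑ t ∈ N, x t := by
  obtain ⟨k, rfl⟩ : ∃ k, m = k + 1 := ⟨m - 1, by omega⟩
  have hsum : ∑ S ∈ N.powersetCard (k + 1), ∑ t ∈ S, x t
      ≤ (k + 1 : ℝ) * ∑ S ∈ N.powersetCard (k + 1), finsetMax x S := by
    rw [mul_sum]
    refine sum_le_sum fun S hS => ?_
    simpa [(mem_powersetCard.1 hS).2] using sum_le_card_mul_finsetMax x S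
  have hchoose : (#N : ℝ) * (#N - 1).choose k = (k + 1) * (#N).choose (k + 1) := by
    exact_mod_cast Nat.mul_choose_sub_one #N k
  refine le_of_mul_le_mul_left ?_ (by positivity : (0 : ℝ) < k + 1)
  calc (k + 1 : ℝ) * ((#N).choose (k + 1) * ∑ t ∈ N, x t)
      = #N * ∑ S ∈ N.powersetCard (k + 1), ∑ t ∈ S, x t := by
        rw [sum_powersetCard_sum, nsmul_eq_mul, ← mul_assoc, ← mul_assoc, hchoose]
    _ ≤ #N * ((k + 1) * ∑ S ∈ N.powersetCard (k + 1), finsetMax x S) := by gcongr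
    _ = (k + 1) * (#N * ∑ S ∈ N.powersetCard (k + 1), finsetMax x S) := by ring

/-- The sum over all `m`-element subsets of the maximum of `x` dominates the
scaled total sum: `n * Σ_{|S|=m} max_{t∈S} x t ≥ C(n,m) * Σ_{t∈N} x t`. -/
theorem card_mul_sum_subset_max_ge
    {α : Type*} [DecidableEq α] (N : Finset α) (x : α → ℝ) (m : ℕ)
    (hn : 1 ≤ N.card) (hm1 : 1 ≤ m) (hmn : m ≤ N.card) :
    (N.card : ℝ) * ∑ S ∈ N.powersetCard m, finsetMax x S ≥
      (N.card.choose m : ℝ) * ∑ t ∈ N, x t :=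
  card_mul_sum_subset_max_ge_general N x m hm1
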